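/- Let v ∈ F_q^k be a vector of full support, n ≥ k+1, E_{n,k,v} = {(x, x·v, 0, ..., 0) : x ∈ F_q^k} ⊆ F_q^n, and let 2 ≤ j ≤ k+1. Then Σ_{i=2}^j A_i(E_{n,k,v}) = Σ_{i=1}^{j-1} C(k,i)(q-1)^i + (1/q)·C(k,j)·[(q-1)^j + (-1)^j (q-1)]. -/

import Mathlib

open scoped Classical

/-- Number of codewords of Hamming weight `i`: the weight distribution `A_i(C)`. -/
noncomputable def weightCount {F : Type*} [Field F] [Fintype F] {n : ℕ}
    (C : Submodule F (Fin n → F)) (i : ℕ) : ℕ :=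
  (Finset.univ.filter (fun c : C => hammingNorm (c : Fin n → F) = i)).card

/-- The linear map `x ↦ (x, x·v, 0, ..., 0)`. -/
noncomputable def Emap (F : Type*) [Field F] (n k : ℕ) (v : Fin k → F) :
    (Fin k → F) →ₗ[F] (Fin n → F) where
  toFun x := fun i =>
    if h : (i : ℕ) < k then x ⟨i, h⟩
    else if (i : ℕ) = k then ∑ j, x j * v j else 0
  map_add' x y := by
    funext i
    by_cases h : (i : ℕ) < k
    · simp [h]
    · by_cases h2 : (i : ℕ) = k <;> simp [h, h2, add_mul, Finset.sum_add_distrib]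
  map_smul' t x := by
    funext i
    by_cases h : (i : ℕ) < k
    · simp [h]
    · by_cases h2 : (i : ℕ) = k <;> simp [h, h2, Finset.mul_sum, mul_assoc]

/-- The code `E_{n,k,v} = {(x, x·v, 0, ..., 0) : x ∈ F_q^k}`. -/
noncomputable def Ecode (F : Type*) [Field F] (n k : ℕ) (v : Fin k → F) :
    Submodule F (Fin n → F) :=
  LinearMap.range (Emap F n k v)

/-!
Up to zero padding, `E_{n,k,v}` is the kernel of `z ↦ z ⬝ᵥ (-1, v)` on `F^(k+1)`, a functional
with no zero coefficient. For such a functional `u` on `F^m`, solving `z ⬝ᵥ u = 0` for the first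
coordinate gives the recursion `N_{m+1}(w+1) = N_m(w+1) + C(m,w)(q-1)^w - N_m(w)` for the number
`N_m(w)` of kernel vectors of weight `w`, whence `q N_m(w) = C(m,w)((q-1)^w + (-1)^w (q-1))`.
Summing `A_i = N_{k+1}(i)` over `2 ≤ i ≤ j` and using Pascal's rule gives the formula.
-/

open Finset Matrix

section Hamming

variable {β : Type*}

theorem hammingNorm_cons [Zero β] {k : ℕ} (a : β) (y : Fin k → β) :
    hammingNorm (Fin.cons a y : Fin (k + 1) → β) = (if a = 0 then 0 else 1) + hammingNorm y := by
  simp only [hammingNorm, card_filter, Fin.sum_univ_succ, Fin.cons_zero, Fin.cons_succ]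
  by_cases ha : a = 0 <;> simp [ha]

variable [Fintype β]

theorem card_filter_fin_cons {k : ℕ} (P : (Fin (k + 1) → β) → Prop) [DecidablePred P] :
    #{x | P x} = ∑ a, #{y : Fin k → β | P (Fin.cons a y)} := by
  simp only [card_filter]
  rw [← (Fin.consEquiv fun _ => β).sum_comp, Fintype.sum_prod_type]
  rfl

theorem card_hammingNorm_eq [Zero β] (k w : ℕ) :
    #{x : Fin k → β | hammingNorm x = w} = k.choose w * (Fintype.card β - 1) ^ w := by
  induction k generalizing w with
  | zero => cases w <;> simp [hammingNorm]
  | succ k ih =>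
    rw [card_filter_fin_cons, Fintype.sum_eq_add_sum_compl 0]
    simp only [hammingNorm_cons, if_true, zero_add]
    rw [sum_congr rfl fun a ha => by rw [if_neg (by simpa using ha)], sum_const, card_compl,
      card_singleton, smul_eq_mul]
    cases w with
    | zero => simp [filter_eq']
    | succ w =>
      simp only [add_comm 1, Nat.add_right_cancel_iff, ih, Nat.choose_succ_succ']
      ring

end Hamming

section Field

variable {F : Type*} [Field F]

theorem Fin.cons_dotProduct_cons {m : ℕ} (c a : F) (y u : Fin m → F) :
    (Fin.cons c y : Fin (m + 1) → F) ⬝ᵥ Fin.cons a u = c * a + y ⬝ᵥ u :=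
  Matrix.cons_dotProduct_cons c y a u

theorem dotProduct_cons_eq_zero_iff {m : ℕ} {a : F} (ha : a ≠ 0) (u : Fin m → F)
    (z : Fin (m + 1) → F) :
    z ⬝ᵥ Fin.cons a u = 0 ↔ z = Fin.cons (-(Fin.tail z ⬝ᵥ u) / a) (Fin.tail z) := by
  conv_lhs => rw [← Fin.cons_self_tail z, Fin.cons_dotProduct_cons]
  conv_rhs => lhs; rw [← Fin.cons_self_tail z]
  rw [Fin.cons_left_injective _ |>.eq_iff, eq_div_iff ha]
  constructor <;> intro h <;> linear_combination h

variable [Fintype F]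

theorem card_hammingNorm_dotProduct_cons_eq_zero {m : ℕ} {a : F} (ha : a ≠ 0)
    (u : Fin m → F) (w : ℕ) :
    #{z : Fin (m + 1) → F | hammingNorm z = w ∧ z ⬝ᵥ Fin.cons a u = 0}
      = #{y : Fin m → F | hammingNorm y + (if y ⬝ᵥ u = 0 then 0 else 1) = w} := by
  have hnorm (y : Fin m → F) : hammingNorm (Fin.cons (-(y ⬝ᵥ u) / a) y : Fin (m + 1) → F) =
      hammingNorm y + (if y ⬝ᵥ u = 0 then 0 else 1) := by
    simp [hammingNorm_cons, ha, add_comm]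
  apply card_nbij' Fin.tail (fun y => Fin.cons (-(y ⬝ᵥ u) / a) y)
  · intro z hz
    simp only [coe_filter, Set.mem_ofPred_eq, mem_univ, true_and] at hz ⊢
    rw [← hnorm, ← (dotProduct_cons_eq_zero_iff ha u z).1 hz.2, hz.1]
  · intro y hy
    simp only [coe_filter, Set.mem_ofPred_eq, mem_univ, true_and] at hy ⊢
    refine ⟨(hnorm y).trans hy, ?_⟩
    rw [dotProduct_cons_eq_zero_iff ha, Fin.tail_cons]
  · intro z hz
    exact ((dotProduct_cons_eq_zero_iff ha u z).1 (mem_filter.1 hz).2.2).symm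
  · intro y _
    exact Fin.tail_cons _ _

theorem card_hammingNorm_add_ite {m : ℕ} (u : Fin m → F) (w : ℕ) :
    #{y : Fin m → F | hammingNorm y + (if y ⬝ᵥ u = 0 then 0 else 1) = w}
      = #{y : Fin m → F | hammingNorm y = w ∧ y ⬝ᵥ u = 0}
        + #{y : Fin m → F | hammingNorm y + 1 = w ∧ y ⬝ᵥ u ≠ 0} := by
  rw [← card_filter_add_card_filter_not (p := fun y : Fin m → F => y ⬝ᵥ u = 0),
    filter_filter, filter_filter]
  congr 2 <;> ext y <;> by_cases hy : y ⬝ᵥ u = 0 <;> simp [hy]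

theorem card_hammingNorm_dotProduct_eq_zero_add_ne_zero {m : ℕ} (u : Fin m → F) (w : ℕ) :
    #{y : Fin m → F | hammingNorm y = w ∧ y ⬝ᵥ u = 0}
      + #{y : Fin m → F | hammingNorm y = w ∧ y ⬝ᵥ u ≠ 0}
      = #{y : Fin m → F | hammingNorm y = w} := by
  rw [← filter_filter, ← filter_filter]
  exact card_filter_add_card_filter_not _

theorem card_mul_card_hammingNorm_dotProduct_eq_zero {m : ℕ} {u : Fin m → F}
    (hu : ∀ i, u i ≠ 0) (w : ℕ) :
    (Fintype.card F : ℤ) * #{z : Fin m → F | hammingNorm z = w ∧ z ⬝ᵥ u = 0}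
      = m.choose w * (((Fintype.card F : ℤ) - 1) ^ w
          + (-1) ^ w * ((Fintype.card F : ℤ) - 1)) := by
  induction m generalizing w with
  | zero => cases w <;> simp [hammingNorm]
  | succ m ih =>
    have ih' := ih (u := Fin.tail u) fun i => hu i.succ
    rw [← Fin.cons_self_tail u, card_hammingNorm_dotProduct_cons_eq_zero (hu 0),
      card_hammingNorm_add_ite]
    cases w with
    | zero => simpa using ih' 0
    | succ w =>
      have hweight := card_hammingNorm_dotProduct_eq_zero_add_ne_zero (Fin.tail u) w
      rw [card_hammingNorm_eq] at hweight
      replace hweight := congrArg (Nat.cast : ℕ → ℤ) hweight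
      push_cast [Nat.cast_sub Fintype.card_pos] at hweight
      simp only [Nat.add_right_cancel_iff, Nat.cast_add, Nat.choose_succ_succ']
      linear_combination ih' (w + 1) - ih' w + (Fintype.card F : ℤ) * hweight

end Field

section Ecode

variable {F : Type*} [Field F] {n k : ℕ}

theorem Emap_injective (hkn : k ≤ n) (v : Fin k → F) : Function.Injective (Emap F n k v) := by
  intro x y hxy
  funext i
  simpa [Emap] using congrFun hxy (Fin.castLE hkn i)

theorem hammingNorm_Emap [Fintype F] (hkn : k + 1 ≤ n) (v x : Fin k → F) :
    hammingNorm (Emap F n k v x) = hammingNorm x + (if x ⬝ᵥ v = 0 then 0 else 1) := by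
  obtain ⟨r, rfl⟩ : ∃ r, n = k + 1 + r := ⟨n - (k + 1), by omega⟩
  simp only [hammingNorm, card_filter, Fin.sum_univ_add, Fin.sum_univ_castSucc]
  simp [Emap, dotProduct, show ∀ i, ¬ k + 1 + i < k by omega,
    show ∀ i, k + 1 + i ≠ k by omega]
  -- the two sides differ only in their `Decidable` instances
  congr

variable [Fintype F]

theorem weightCount_Ecode (hkn : k + 1 ≤ n) (v : Fin k → F) (w : ℕ) :
    weightCount (Ecode F n k v) w
      = #{x : Fin k → F | hammingNorm x + (if x ⬝ᵥ v = 0 then 0 else 1) = w} := by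
  symm
  refine card_equiv (LinearEquiv.ofInjective _ (Emap_injective (by omega) v)).toEquiv fun x => ?_
  simp only [mem_filter, mem_univ, true_and, ← hammingNorm_Emap hkn]
  rfl

theorem card_mul_weightCount_Ecode (hkn : k + 1 ≤ n) {v : Fin k → F} (hv : ∀ i, v i ≠ 0)
    (w : ℕ) :
    (Fintype.card F : ℤ) * weightCount (Ecode F n k v) w
      = (k + 1).choose w * (((Fintype.card F : ℤ) - 1) ^ w
          + (-1) ^ w * ((Fintype.card F : ℤ) - 1)) := by
  have hu : ∀ i, (Fin.cons (-1) v : Fin (k + 1) → F) i ≠ 0 :=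
    Fin.cases (by simp) fun i => by simpa using hv i
  rw [weightCount_Ecode hkn,
    ← card_hammingNorm_dotProduct_cons_eq_zero (neg_ne_zero.2 one_ne_zero),
    card_mul_card_hammingNorm_dotProduct_eq_zero hu]

end Ecode

theorem sum_Icc_choose_succ_mul {K : Type*} [Field K] {q : K} (hq : q ≠ 0) (k : ℕ) {j : ℕ}
    (hj : 1 ≤ j) :
    ∑ i ∈ Icc 2 j, 1 / q * ((k + 1).choose i : K) * ((q - 1) ^ i + (-1) ^ i * (q - 1))
      = ∑ i ∈ Icc 1 (j - 1), (k.choose i : K) * (q - 1) ^ i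
          + 1 / q * (k.choose j : K) * ((q - 1) ^ j + (-1) ^ j * (q - 1)) := by
  induction j, hj using Nat.le_induction with
  | base => simp
  | succ j hj ih =>
    obtain ⟨j, rfl⟩ : ∃ i, j = i + 1 := ⟨j - 1, by omega⟩
    rw [sum_Icc_succ_top (by omega), ih, Nat.add_sub_cancel, Nat.add_sub_cancel,
      sum_Icc_succ_top (by omega), Nat.choose_succ_succ' k (j + 1)]
    field_simp
    push_cast
    ring

/-- Partial sums of the weight distribution of `E_{n,k,v}` for `v` of full support:
`Σ_{i=2}^j A_i(E_{n,k,v}) = Σ_{i=1}^{j-1} C(k,i)(q-1)^i + (1/q)·C(k,j)·[(q-1)^j + (-1)^j(q-1)]`. -/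
theorem sum_weightCount_Ecode {F : Type*} [Field F] [Fintype F] {n k q : ℕ}
    (hq : Fintype.card F = q) (hkn : k + 1 ≤ n)
    (v : Fin k → F) (hv : ∀ j, v j ≠ 0) :
    ∀ j : ℕ, 2 ≤ j → j ≤ k + 1 →
      (∑ i ∈ Finset.Icc 2 j, (weightCount (Ecode F n k v) i : ℝ)) =
        (∑ i ∈ Finset.Icc 1 (j - 1), (Nat.choose k i : ℝ) * ((q : ℝ) - 1) ^ i) +
          (1 / (q : ℝ)) * (Nat.choose k j : ℝ) *
            (((q : ℝ) - 1) ^ j + (-1 : ℝ) ^ j * ((q : ℝ) - 1)) := by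
  intro j hj _
  subst hq
  have hq0 : (Fintype.card F : ℝ) ≠ 0 := Nat.cast_ne_zero.2 Fintype.card_ne_zero
  have hA (i : ℕ) : (weightCount (Ecode F n k v) i : ℝ) = 1 / (Fintype.card F : ℝ)
      * ((k + 1).choose i : ℝ) * (((Fintype.card F : ℝ) - 1) ^ i
        + (-1) ^ i * ((Fintype.card F : ℝ) - 1)) := by
    have h := congrArg (Int.cast : ℤ → ℝ) (card_mul_weightCount_Ecode hkn hv i)
    push_cast at h
    field_simp
    linear_combination h
  rw [sum_congr rfl fun i _ => hA i]
  exact sum_Icc_choose_succ_mul hq0 k (by omega)
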